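/- arXiv:2502.16465 — 2 statements merged into one kernel-verified Lean document; each statement's English description precedes it below -/
import Mathlib

section
/- Let G = (V,E) be a finite connected simple graph with graph distance d. For α ∈ [0,1), define the α-lazy random walk measure m_x^α by m_x^α(x) = α, m_x^α(v) = (1−α)/deg(x) for v adjacent to x, and 0 otherwise, and define κ_α(x,y) = 1 − W(m_x^α, m_y^α)/d(x,y). Then for any two distinct vertices x and y, κ_α(x,y) ≤ 2(1−α)/d(x,y). -/
open Finset

/-- A probability measure on a finite set, given as a density. -/
def IsProbMeasure {V : Type*} [Fintype V] (m : V → ℝ) : Prop :=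
  (∀ x, 0 ≤ m x) ∧ ∑ x, m x = 1

/-- A coupling between two probability measures on a finite set. -/
def IsCoupling {V : Type*} [Fintype V] (A : V × V → ℝ) (m₁ m₂ : V → ℝ) : Prop :=
  (∀ p, 0 ≤ A p) ∧ (∀ x, ∑ y, A (x, y) = m₁ x) ∧ (∀ y, ∑ x, A (x, y) = m₂ y)

/-- The Wasserstein-1 (transportation) distance between two probability measures on a
finite set, with respect to a cost `d`. -/
noncomputable def W {V : Type*} [Fintype V] (d : V → V → ℝ) (m₁ m₂ : V → ℝ) : ℝ :=
  sInf {c | ∃ A, IsCoupling A m₁ m₂ ∧ c = ∑ p : V × V, A p * d p.1 p.2}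

lemma W_symm {V : Type*} [Fintype V] (d : V → V → ℝ) (hd : ∀ x y, d x y = d y x)
    (m₁ m₂ : V → ℝ) : W d m₁ m₂ = W d m₂ m₁ := by
  have key : ∀ m₁ m₂ : V → ℝ,
      {c | ∃ A, IsCoupling A m₁ m₂ ∧ c = ∑ p : V × V, A p * d p.1 p.2} ⊆
      {c | ∃ A, IsCoupling A m₂ m₁ ∧ c = ∑ p : V × V, A p * d p.1 p.2} := by
    rintro m₁ m₂ c ⟨A, ⟨h0, h1, h2⟩, rfl⟩
    refine ⟨fun p => A (p.2, p.1), ⟨fun p => h0 _, fun x => h2 x, fun y => h1 y⟩, ?_⟩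
    refine Fintype.sum_equiv (Equiv.prodComm V V) _ _ ?_
    intro p
    simp [Equiv.prodComm, hd p.1 p.2]
  unfold W
  congr 1
  exact Set.Subset.antisymm (key m₁ m₂) (key m₂ m₁)

/-- The `α`-lazy random walk measure at a vertex `x` of a graph. -/
noncomputable def lazyWalk {V : Type*} [Fintype V] [DecidableEq V] (G : SimpleGraph V)
    [DecidableRel G.Adj] (α : ℝ) (x : V) : V → ℝ :=
  fun v => if v = x then α else if G.Adj x v then (1 - α) / (G.degree x) else 0

/-- The `α`-Ricci curvature `κ_α(x,y) = 1 - W(m_x^α, m_y^α)/d(x,y)`. -/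
noncomputable def kappaAlpha {V : Type*} [Fintype V] [DecidableEq V] (G : SimpleGraph V)
    [DecidableRel G.Adj] (α : ℝ) (x y : V) : ℝ :=
  1 - W (fun a b => (G.dist a b : ℝ)) (lazyWalk G α x) (lazyWalk G α y) / (G.dist x y)

lemma kappaAlpha_symm {V : Type*} [Fintype V] [DecidableEq V] (G : SimpleGraph V)
    [DecidableRel G.Adj] (α : ℝ) (x y : V) :
    kappaAlpha G α x y = kappaAlpha G α y x := by
  unfold kappaAlpha
  rw [W_symm _ (fun a b => by rw [SimpleGraph.dist_comm]),
    SimpleGraph.dist_comm]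

/-- The Lin–Lu–Yau Ricci curvature `κ_LLY(x,y) = lim_{α → 1⁻} κ_α(x,y)/(1-α)`. -/
noncomputable def kappaLLY {V : Type*} [Fintype V] [DecidableEq V] (G : SimpleGraph V)
    [DecidableRel G.Adj] (x y : V) : ℝ :=
  Filter.limUnder (nhdsWithin 1 (Set.Ico (0:ℝ) 1)) (fun α => kappaAlpha G α x y / (1 - α))

lemma kappaLLY_symm {V : Type*} [Fintype V] [DecidableEq V] (G : SimpleGraph V)
    [DecidableRel G.Adj] (x y : V) : kappaLLY G x y = kappaLLY G y x := by
  unfold kappaLLY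
  congr 1
  funext α
  rw [kappaAlpha_symm]

/-- Integral `α`-Ricci curvature `I^α_{κ₀}`: total amount of `α`-Ricci curvature below the
threshold `(1-α)κ₀`, summed over the edges of `G`. -/
noncomputable def IAlpha {V : Type*} [Fintype V] [DecidableEq V] (G : SimpleGraph V)
    [DecidableRel G.Adj] (α κ₀ : ℝ) : ℝ :=
  ∑ e ∈ G.edgeFinset,
    Sym2.lift ⟨fun x y => max 0 ((1 - α) * κ₀ - kappaAlpha G α x y),
      fun x y => by simp only []; rw [kappaAlpha_symm]⟩ e

/-- Integral Lin–Lu–Yau Ricci curvature `I_{κ₀}`: total amount of Lin–Lu–Yau Ricci curvature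
below the threshold `κ₀`, summed over the edges of `G`. -/
noncomputable def ILLY {V : Type*} [Fintype V] [DecidableEq V] (G : SimpleGraph V)
    [DecidableRel G.Adj] (κ₀ : ℝ) : ℝ :=
  ∑ e ∈ G.edgeFinset,
    Sym2.lift ⟨fun x y => max 0 (κ₀ - kappaLLY G x y),
      fun x y => by simp only []; rw [kappaLLY_symm]⟩ e

/-- The diameter of a finite graph. -/
noncomputable def gDiam {V : Type*} [Fintype V] (G : SimpleGraph V) : ℕ :=
  Finset.univ.sup fun p : V × V => G.dist p.1 p.2

/-!
Couple `m_x` and `m_y` arbitrarily. Along each transported pair `(u, v)` the triangle inequality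
gives `d(x,y) ≤ d(x,u) + d(u,v) + d(v,y)`; averaging over the coupling, the outer terms become the
mean jump lengths of the two lazy walks, each equal to `1 - α`. Hence `W(m_x, m_y) ≥ d(x,y) - 2(1-α)`.
-/

section Transport

variable {V : Type*} [Fintype V]

lemma IsCoupling.sum_mul_fst {A : V × V → ℝ} {m₁ m₂ : V → ℝ} (hA : IsCoupling A m₁ m₂)
    (f : V → ℝ) : ∑ p : V × V, A p * f p.1 = ∑ u, m₁ u * f u := by
  simp only [Fintype.sum_prod_type, ← Finset.sum_mul, hA.2.1]

lemma IsCoupling.sum_mul_snd {A : V × V → ℝ} {m₁ m₂ : V → ℝ} (hA : IsCoupling A m₁ m₂)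
    (f : V → ℝ) : ∑ p : V × V, A p * f p.2 = ∑ v, m₂ v * f v := by
  simp only [Fintype.sum_prod_type_right, ← Finset.sum_mul, hA.2.2]

lemma IsProbMeasure.isCoupling_prod {m₁ m₂ : V → ℝ} (h₁ : IsProbMeasure m₁)
    (h₂ : IsProbMeasure m₂) : IsCoupling (fun p => m₁ p.1 * m₂ p.2) m₁ m₂ :=
  ⟨fun p => mul_nonneg (h₁.1 _) (h₂.1 _),
    fun u => by simp only [← Finset.mul_sum, h₂.2, mul_one],
    fun v => by simp only [← Finset.sum_mul, h₁.2, one_mul]⟩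

lemma sub_sum_sub_sum_le_sum_coupling {d : V → V → ℝ}
    (hd : ∀ a b c, d a c ≤ d a b + d b c) {A : V × V → ℝ} {m₁ m₂ : V → ℝ}
    (hA : IsCoupling A m₁ m₂) (h₁ : IsProbMeasure m₁) (x y : V) :
    d x y - ∑ u, m₁ u * d x u - ∑ v, m₂ v * d v y ≤ ∑ p : V × V, A p * d p.1 p.2 := by
  have hmass : ∑ p : V × V, A p = 1 := by
    simpa [h₁.2] using hA.sum_mul_fst (fun _ => 1)
  calc d x y - ∑ u, m₁ u * d x u - ∑ v, m₂ v * d v y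
      = ∑ p : V × V, A p * (d x y - d x p.1 - d p.2 y) := by
        simp only [mul_sub, Finset.sum_sub_distrib, ← Finset.sum_mul, hmass, one_mul,
          hA.sum_mul_fst (d x), hA.sum_mul_snd (d · y)]
    _ ≤ ∑ p : V × V, A p * d p.1 p.2 := by
        refine Finset.sum_le_sum fun p _ => mul_le_mul_of_nonneg_left ?_ (hA.1 p)
        linarith [hd x p.1 y, hd p.1 p.2 y]

lemma sub_sum_sub_sum_le_W {d : V → V → ℝ} (hd : ∀ a b c, d a c ≤ d a b + d b c)
    {m₁ m₂ : V → ℝ} (h₁ : IsProbMeasure m₁) (h₂ : IsProbMeasure m₂) (x y : V) :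
    d x y - ∑ u, m₁ u * d x u - ∑ v, m₂ v * d v y ≤ W d m₁ m₂ :=
  le_csInf ⟨_, _, h₁.isCoupling_prod h₂, rfl⟩ fun _ ⟨_, hA, hc⟩ =>
    hc ▸ sub_sum_sub_sum_le_sum_coupling hd hA h₁ x y

end Transport

section LazyWalk

variable {V : Type*} [Fintype V] [DecidableEq V] (G : SimpleGraph V) [DecidableRel G.Adj]

lemma sum_lazyWalk_mul (α : ℝ) (x : V) (f : V → ℝ) :
    ∑ u, lazyWalk G α x u * f u
      = α * f x + (1 - α) / G.degree x * ∑ u ∈ G.neighborFinset x, f u := by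
  have hsplit : ∀ u, lazyWalk G α x u * f u
      = (if u = x then α * f x else 0)
        + if u ∈ G.neighborFinset x then (1 - α) / G.degree x * f u else 0 := by
    intro u
    by_cases hu : u = x
    · subst hu; simp [lazyWalk]
    · simp [lazyWalk, hu]
  simp only [hsplit, Finset.sum_add_distrib, Finset.sum_ite_eq', Finset.mem_univ, if_true,
    Finset.sum_ite_mem, Finset.univ_inter, Finset.mul_sum]

lemma isProbMeasure_lazyWalk {α : ℝ} (hα₀ : 0 ≤ α) (hα₁ : α ≤ 1) {x : V}
    (hx : G.degree x ≠ 0) : IsProbMeasure (lazyWalk G α x) := by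
  refine ⟨fun u => ?_, ?_⟩
  · unfold lazyWalk
    split_ifs
    exacts [hα₀, div_nonneg (sub_nonneg.mpr hα₁) (Nat.cast_nonneg _), le_rfl]
  · simpa [G.card_neighborFinset_eq_degree, hx] using sum_lazyWalk_mul G α x (fun _ => 1)

lemma sum_lazyWalk_mul_dist (α : ℝ) {x : V} (hx : G.degree x ≠ 0) :
    ∑ u, lazyWalk G α x u * (G.dist x u : ℝ) = 1 - α := by
  have hnbr : ∀ u ∈ G.neighborFinset x, (G.dist x u : ℝ) = 1 := fun u hu => by
    rw [SimpleGraph.dist_eq_one_iff_adj.mpr ((G.mem_neighborFinset x u).mp hu), Nat.cast_one]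
  rw [sum_lazyWalk_mul, Finset.sum_congr rfl hnbr]
  simp [G.card_neighborFinset_eq_degree, hx]

end LazyWalk

/-- Lin–Lu–Yau, Lemma 2.2: `κ_α(x,y) ≤ 2(1-α)/d(x,y)`. -/
theorem stmt_2 {V : Type*} [Fintype V] [DecidableEq V] (G : SimpleGraph V)
    [DecidableRel G.Adj] (hG : G.Connected) (α : ℝ) (hα : α ∈ Set.Ico (0:ℝ) 1)
    (x y : V) (hxy : x ≠ y) :
    kappaAlpha G α x y ≤ 2 * (1 - α) / (G.dist x y) := by
  have hx : G.degree x ≠ 0 := ((hG.preconnected x y).degree_pos_left hxy).ne'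
  have hy : G.degree y ≠ 0 := ((hG.preconnected x y).degree_pos_right hxy).ne'
  have hD : (0 : ℝ) < G.dist x y := by exact_mod_cast hG.pos_dist_of_ne hxy
  have hW := sub_sum_sub_sum_le_W (d := fun a b => (G.dist a b : ℝ))
    (fun a b c => by exact_mod_cast hG.dist_triangle)
    (isProbMeasure_lazyWalk G hα.1 hα.2.le hx) (isProbMeasure_lazyWalk G hα.1 hα.2.le hy) x y
  have hmean_y : ∑ v, lazyWalk G α y v * (G.dist v y : ℝ) = 1 - α := by
    simp_rw [G.dist_comm (v := y), sum_lazyWalk_mul_dist G α hy]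
  rw [sum_lazyWalk_mul_dist G α hx, hmean_y] at hW
  rw [kappaAlpha, sub_le_iff_le_add, ← add_div, le_div_iff₀ hD]
  linarith
end

section
/- Let G be a finite connected simple graph, α ∈ [0,1), and κ_0 ∈ ℝ. Define ρ^α_{κ_0}(x,y) = max{0, (1−α)κ_0 − κ_α(x,y)} for each edge xy, and I^α_{κ_0} = ∑_{xy ∈ E} ρ^α_{κ_0}(x,y). Then for any two distinct vertices x and y connected by a geodesic path x_0 = x, x_1, …, x_{d(x,y)} = y (consecutive vertices adjacent), one has κ_α(x,y) ≥ (1−α)κ_0 − I^α_{κ_0}/d(x,y). -/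
open Finset

/-!
Along the geodesic `x = x₀, …, x_d = y`, the triangle inequality for the Wasserstein distance
gives `W(m_x, m_y) ≤ ∑ᵢ W(m_{xᵢ}, m_{xᵢ₊₁}) = ∑ᵢ (1 - κ_α(xᵢ, xᵢ₊₁))`, and each summand is at most
`1 - (1-α)κ₀ + ρ(xᵢ, xᵢ₊₁)`. The edges of a geodesic are pairwise distinct, so the defects `ρ`
along it add up to at most `I^α_{κ₀}`; dividing by `d = d(x, y)` gives the bound.
-/

section Transport

variable {V : Type*} [Fintype V] {d : V → V → ℝ} {m₁ m₂ m₃ : V → ℝ} {A B : V × V → ℝ}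

noncomputable def transportCost (d : V → V → ℝ) (A : V × V → ℝ) : ℝ :=
  ∑ p : V × V, A p * d p.1 p.2

theorem W_le_transportCost (hd : ∀ a b, 0 ≤ d a b) (hA : IsCoupling A m₁ m₂) :
    W d m₁ m₂ ≤ transportCost d A :=
  csInf_le ⟨0, by
    rintro _ ⟨B, hB, rfl⟩
    exact sum_nonneg fun p _ => mul_nonneg (hB.1 p) (hd _ _)⟩ ⟨A, hA, rfl⟩

theorem le_W {c : ℝ} (hne : ∃ A, IsCoupling A m₁ m₂)
    (hc : ∀ A, IsCoupling A m₁ m₂ → c ≤ transportCost d A) : c ≤ W d m₁ m₂ := by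
  obtain ⟨A, hA⟩ := hne
  exact le_csInf ⟨_, A, hA, rfl⟩ (by rintro _ ⟨B, hB, rfl⟩; exact hc B hB)

theorem isCoupling_mul (h₁ : IsProbMeasure m₁) (h₂ : IsProbMeasure m₂) :
    IsCoupling (fun p : V × V => m₁ p.1 * m₂ p.2) m₁ m₂ :=
  ⟨fun p => mul_nonneg (h₁.1 _) (h₂.1 _),
    fun x => by simp only [← mul_sum, h₂.2, mul_one],
    fun y => by simp only [← sum_mul, h₁.2, one_mul]⟩

namespace IsCoupling

theorem le_fst (hA : IsCoupling A m₁ m₂) (x y : V) : A (x, y) ≤ m₁ x :=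
  hA.2.1 x ▸ single_le_sum (fun z _ => hA.1 (x, z)) (mem_univ y)

theorem le_snd (hA : IsCoupling A m₁ m₂) (x y : V) : A (x, y) ≤ m₂ y :=
  hA.2.2 y ▸ single_le_sum (fun z _ => hA.1 (z, y)) (mem_univ x)

theorem eq_zero_of_fst_eq_zero (hA : IsCoupling A m₁ m₂) {x : V} (hx : m₁ x = 0) (y : V) :
    A (x, y) = 0 :=
  le_antisymm (hx ▸ hA.le_fst x y) (hA.1 _)

theorem eq_zero_of_snd_eq_zero (hA : IsCoupling A m₁ m₂) (x : V) {y : V} (hy : m₂ y = 0) :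
    A (x, y) = 0 :=
  le_antisymm (hy ▸ hA.le_snd x y) (hA.1 _)

end IsCoupling

/-- The coupling obtained by gluing `A` and `B` along their common marginal `m`. Where `m y = 0`
both `A (x, y)` and `B (y, z)` vanish, so the junk value of `· / 0` does no harm. -/
noncomputable def glueCouplings (A B : V × V → ℝ) (m : V → ℝ) : V × V → ℝ :=
  fun p => ∑ y, A (p.1, y) * B (y, p.2) / m y

theorem IsCoupling.glue (hA : IsCoupling A m₁ m₂) (hB : IsCoupling B m₂ m₃) :
    IsCoupling (glueCouplings A B m₂) m₁ m₃ := by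
  refine ⟨fun p => sum_nonneg fun y _ => div_nonneg (mul_nonneg (hA.1 _) (hB.1 _))
    ((hA.1 _).trans (hA.le_snd p.1 y)), fun x => ?_, fun z => ?_⟩
  · calc ∑ z, ∑ y, A (x, y) * B (y, z) / m₂ y
        = ∑ y, A (x, y) * m₂ y / m₂ y := by
          rw [sum_comm]
          simp only [mul_div_right_comm _ _ (m₂ _), ← mul_sum, hB.2.1]
      _ = m₁ x := by
          simp only [mul_div_cancel_of_imp (hA.eq_zero_of_snd_eq_zero x), hA.2.1]
  · calc ∑ x, ∑ y, A (x, y) * B (y, z) / m₂ y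
        = ∑ y, B (y, z) * m₂ y / m₂ y := by
          rw [sum_comm]
          simp only [mul_comm (A _), mul_div_assoc, ← mul_sum, ← sum_div, hA.2.2]
      _ = m₃ z := by
          simp only [mul_div_cancel_of_imp (hB.eq_zero_of_fst_eq_zero · z), hB.2.2]

theorem transportCost_glue_le (htri : ∀ a b c, d a c ≤ d a b + d b c)
    (hA : IsCoupling A m₁ m₂) (hB : IsCoupling B m₂ m₃) :
    transportCost d (glueCouplings A B m₂) ≤ transportCost d A + transportCost d B := by
  set w : V → V → V → ℝ := fun x y z => A (x, y) * B (y, z) / m₂ y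
  have hw : ∀ x y z, 0 ≤ w x y z := fun x y z =>
    div_nonneg (mul_nonneg (hA.1 _) (hB.1 _)) ((hA.1 _).trans (hA.le_snd x y))
  have hwA : ∀ x y, ∑ z, w x y z = A (x, y) := fun x y => by
    simp only [w, ← mul_sum, ← sum_div, hB.2.1,
      mul_div_cancel_of_imp (hA.eq_zero_of_snd_eq_zero x)]
  have hwB : ∀ y z, ∑ x, w x y z = B (y, z) := fun y z => by
    simp only [w, ← sum_div, ← sum_mul, hA.2.2, mul_comm (m₂ y),
      mul_div_cancel_of_imp (hB.eq_zero_of_fst_eq_zero · z)]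
  calc transportCost d (glueCouplings A B m₂)
      = ∑ x, ∑ z, ∑ y, w x y z * d x z := by
        simp only [transportCost, glueCouplings, Fintype.sum_prod_type, sum_mul, w]
    _ ≤ ∑ x, ∑ z, ∑ y, (w x y z * d x y + w x y z * d y z) := by
        gcongr with x _ z _ y _
        rw [← mul_add]
        exact mul_le_mul_of_nonneg_left (htri x y z) (hw x y z)
    _ = ∑ x, ∑ y, (∑ z, w x y z) * d x y + ∑ y, ∑ z, (∑ x, w x y z) * d y z := by
        simp only [sum_add_distrib, sum_mul]
        congr 1
        · exact sum_congr rfl fun x _ => sum_comm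
        · rw [sum_comm]
          exact (sum_congr rfl fun z _ => sum_comm).trans sum_comm
    _ = transportCost d A + transportCost d B := by
        simp only [hwA, hwB, transportCost, Fintype.sum_prod_type]

theorem W_triangle (hd : ∀ a b, 0 ≤ d a b) (htri : ∀ a b c, d a c ≤ d a b + d b c)
    (h₁ : IsProbMeasure m₁) (h₂ : IsProbMeasure m₂) (h₃ : IsProbMeasure m₃) :
    W d m₁ m₃ ≤ W d m₁ m₂ + W d m₂ m₃ := by
  rw [← sub_le_iff_le_add']
  refine le_W ⟨_, isCoupling_mul h₂ h₃⟩ fun B hB => ?_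
  rw [sub_le_comm]
  refine le_W ⟨_, isCoupling_mul h₁ h₂⟩ fun A hA => ?_
  rw [sub_le_iff_le_add]
  exact (W_le_transportCost hd (hA.glue hB)).trans (transportCost_glue_le htri hA hB)

theorem W_le_sum_range (hd : ∀ a b, 0 ≤ d a b) (htri : ∀ a b c, d a c ≤ d a b + d b c)
    {m : ℕ → V → ℝ} (hm : ∀ i, IsProbMeasure (m i)) {n : ℕ} (hn : 0 < n) :
    W d (m 0) (m n) ≤ ∑ i ∈ range n, W d (m i) (m (i + 1)) := by
  induction n, hn using Nat.le_induction with
  | base => simp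
  | succ n _ ih =>
    rw [sum_range_succ]
    exact (W_triangle hd htri (hm 0) (hm n) (hm (n + 1))).trans (by gcongr)

end Transport

section Graph

variable {V : Type*} {G : SimpleGraph V}

theorem dist_le_sub_of_adj_chain {p : ℕ → V} {k : ℕ} (hadj : ∀ i < k, G.Adj (p i) (p (i + 1)))
    {i j : ℕ} (hij : i ≤ j) (hjk : j ≤ k) : G.dist (p i) (p j) ≤ j - i := by
  induction j, hij using Nat.le_induction with
  | base => simp
  | succ j hij ih =>
    have hstep := (hadj j (by omega)).reachable.dist_triangle_right (p i)
    rw [SimpleGraph.dist_eq_one_iff_adj.2 (hadj j (by omega))] at hstep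
    have := ih (by omega)
    omega

theorem injOn_Iic_of_dist_eq (hG : G.Connected) {p : ℕ → V} {k : ℕ}
    (hadj : ∀ i < k, G.Adj (p i) (p (i + 1))) (hk : G.dist (p 0) (p k) = k) :
    Set.InjOn p (Set.Iic k) := by
  have hne : ∀ i j, i < j → j ≤ k → p i ≠ p j := fun i j hij hjk hp => by
    have h₁ := dist_le_sub_of_adj_chain hadj (Nat.zero_le i) (by omega)
    have h₂ := dist_le_sub_of_adj_chain hadj hjk le_rfl
    have h₃ : G.dist (p 0) (p k) ≤ G.dist (p 0) (p i) + G.dist (p j) (p k) := by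
      rw [← hp]
      exact hG.dist_triangle
    omega
  intro i hi j hj hij
  simp only [Set.mem_Iic] at hi hj
  rcases lt_trichotomy i j with h | h | h
  · exact absurd hij (hne i j h hj)
  · exact h
  · exact absurd hij.symm (hne j i h hi)

theorem sum_range_le_sum_edgeFinset [Fintype G.edgeSet] {f : Sym2 V → ℝ} (hf : ∀ e, 0 ≤ f e)
    {p : ℕ → V} {k : ℕ} (hadj : ∀ i < k, G.Adj (p i) (p (i + 1)))
    (hinj : Set.InjOn p (Set.Iic k)) :
    ∑ i ∈ range k, f s(p i, p (i + 1)) ≤ ∑ e ∈ G.edgeFinset, f e := by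
  classical
  have hedges : Set.InjOn (fun i => s(p i, p (i + 1))) (range k) := by
    intro i hi j hj h
    simp only [coe_range, Set.mem_Iio] at hi hj
    rcases Sym2.eq_iff.1 h with ⟨h₁, -⟩ | ⟨h₁, h₂⟩
    · exact hinj (Set.mem_Iic.2 hi.le) (Set.mem_Iic.2 hj.le) h₁
    · have := hinj (Set.mem_Iic.2 hi.le) (Set.mem_Iic.2 hj) h₁
      have := hinj (Set.mem_Iic.2 hi) (Set.mem_Iic.2 hj.le) h₂
      omega
  rw [← sum_image hedges]
  refine sum_le_sum_of_subset_of_nonneg (fun e he => ?_) fun e _ _ => hf e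
  obtain ⟨i, hi, rfl⟩ := mem_image.1 he
  exact SimpleGraph.mem_edgeFinset.2 (hadj i (mem_range.1 hi))

variable [Fintype V] [DecidableEq V] [DecidableRel G.Adj]

theorem lazyWalk_isProbMeasure {α : ℝ} (hα₀ : 0 ≤ α) (hα₁ : α ≤ 1) {x : V}
    (hx : 0 < G.degree x) : IsProbMeasure (lazyWalk G α x) := by
  refine ⟨fun v => ?_, ?_⟩
  · unfold lazyWalk
    split_ifs
    exacts [hα₀, div_nonneg (sub_nonneg.2 hα₁) (Nat.cast_nonneg _), le_rfl]
  · have hsplit : ∀ v, lazyWalk G α x v =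
        (if v = x then α else 0) + (if G.Adj x v then (1 - α) / G.degree x else 0) := by
      intro v
      unfold lazyWalk
      split_ifs <;> simp_all
    have hdeg : (G.degree x : ℝ) ≠ 0 := by positivity
    simp only [hsplit, sum_add_distrib, sum_ite_eq', mem_univ, if_true, ← sum_filter,
      ← SimpleGraph.neighborFinset_eq_filter, sum_const, SimpleGraph.card_neighborFinset_eq_degree,
      nsmul_eq_mul, mul_div_cancel₀ _ hdeg]
    ring

theorem kappaAlpha_of_adj (α : ℝ) {a b : V} (h : G.Adj a b) :
    kappaAlpha G α a b = 1 - W (fun u v => (G.dist u v : ℝ)) (lazyWalk G α a) (lazyWalk G α b) := by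
  simp [kappaAlpha, SimpleGraph.dist_eq_one_iff_adj.2 h]

theorem sum_range_le_IAlpha (α κ₀ : ℝ) {p : ℕ → V} {k : ℕ}
    (hadj : ∀ i < k, G.Adj (p i) (p (i + 1))) (hinj : Set.InjOn p (Set.Iic k)) :
    ∑ i ∈ range k, max 0 ((1 - α) * κ₀ - kappaAlpha G α (p i) (p (i + 1))) ≤ IAlpha G α κ₀ := by
  unfold IAlpha
  exact sum_range_le_sum_edgeFinset (f := Sym2.lift ⟨fun a b => max 0 ((1 - α) * κ₀ -
    kappaAlpha G α a b), fun a b => by simp only [kappaAlpha_symm G α a b]⟩)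
    (fun e => e.ind fun _ _ => le_max_left _ _) hadj hinj

end Graph

/-- Key lemma with integral curvature: along a geodesic,
`κ_α(x,y) ≥ (1-α)κ₀ - I^α_{κ₀}/d(x,y)`. -/
theorem stmt_3 {V : Type*} [Fintype V] [DecidableEq V] (G : SimpleGraph V)
    [DecidableRel G.Adj] (hG : G.Connected) (α : ℝ) (hα : α ∈ Set.Ico (0:ℝ) 1)
    (κ₀ : ℝ) (x y : V) (hxy : x ≠ y) (p : ℕ → V)
    (hp0 : p 0 = x) (hpk : p (G.dist x y) = y)
    (hadj : ∀ i < G.dist x y, G.Adj (p i) (p (i + 1))) :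
    kappaAlpha G α x y ≥ (1 - α) * κ₀ - IAlpha G α κ₀ / (G.dist x y) := by
  have : Nontrivial V := ⟨x, y, hxy⟩
  have hk : (0 : ℝ) < G.dist x y := mod_cast hG.pos_dist_of_ne hxy
  have hchain := W_le_sum_range (d := fun u v => (G.dist u v : ℝ))
    (m := fun i => lazyWalk G α (p i)) (fun _ _ => Nat.cast_nonneg _)
    (fun _ _ _ => mod_cast hG.dist_triangle)
    (fun _ => lazyWalk_isProbMeasure hα.1 hα.2.le (hG.preconnected.degree_pos_of_nontrivial _))
    (hG.pos_dist_of_ne hxy)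
  have hedge : ∀ i ∈ range (G.dist x y), W (fun u v => (G.dist u v : ℝ)) (lazyWalk G α (p i))
      (lazyWalk G α (p (i + 1))) ≤
      1 - (1 - α) * κ₀ + max 0 ((1 - α) * κ₀ - kappaAlpha G α (p i) (p (i + 1))) := by
    intro i hi
    rw [kappaAlpha_of_adj α (hadj i (mem_range.1 hi))]
    linarith [le_max_right 0 ((1 - α) * κ₀ - (1 - W (fun u v => (G.dist u v : ℝ))
      (lazyWalk G α (p i)) (lazyWalk G α (p (i + 1)))))]
  have hI := sum_range_le_IAlpha α κ₀ hadj (injOn_Iic_of_dist_eq hG hadj (by rw [hp0, hpk]))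
  simp only [hp0, hpk] at hchain
  replace hchain := hchain.trans (sum_le_sum hedge)
  rw [sum_add_distrib, sum_const, card_range, nsmul_eq_mul] at hchain
  have hW := div_le_div_of_nonneg_right (hchain.trans (add_le_add_right hI _)) hk.le
  rw [add_div, mul_div_cancel_left₀ _ hk.ne'] at hW
  rw [kappaAlpha]
  linarith
end
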